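/- Let Y, Z, N be random variables on a common probability space taking values in a finite abelian group (for Y and N) and a finite set (for Z), where N is independent of the pair (Y, Z). Then the Shannon conditional entropy satisfies H(Z | Y + N) ≥ H(Z | Y). In particular, adding independent noise N to a feature tensor Y can only increase the uncertainty about any other variable Z given the observed noisy feature. -/

import Mathlib

/-!
Conditioning reduces entropy, so `H(Z | Y + N) ≥ H(Z | Y, Y + N)`. The pair `(Y, Y + N)` is
an invertible relabelling of `(Y, N)`, and independence of `N` from `(Y, Z)` gives
`H(Z | Y, N) = H(Z | Y)`.
-/

/-- Probability that the random variable `X` (on a finite probability space with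
probability mass function `p`) takes the value `a`. -/
noncomputable def pr {Ω α : Type*} [Fintype Ω] [DecidableEq α]
    (p : Ω → ℝ) (X : Ω → α) (a : α) : ℝ :=
  ∑ ω ∈ Finset.univ.filter (fun ω => X ω = a), p ω

/-- Shannon entropy `H(X)` of a finite-valued random variable `X`. -/
noncomputable def ent {Ω α : Type*} [Fintype Ω] [Fintype α] [DecidableEq α]
    (p : Ω → ℝ) (X : Ω → α) : ℝ :=
  ∑ a, Real.negMulLog (pr p X a)

/-- Shannon conditional entropy `H(X | Y) = H(X, Y) - H(Y)`. -/
noncomputable def condEnt {Ω α β : Type*} [Fintype Ω] [Fintype α] [DecidableEq α]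
    [Fintype β] [DecidableEq β] (p : Ω → ℝ) (X : Ω → α) (Y : Ω → β) : ℝ :=
  ent p (fun ω => (X ω, Y ω)) - ent p Y

/-- Shannon mutual information `I(X ; Y) = H(X) + H(Y) - H(X, Y)`. -/
noncomputable def mutInfo {Ω α β : Type*} [Fintype Ω] [Fintype α] [DecidableEq α]
    [Fintype β] [DecidableEq β] (p : Ω → ℝ) (X : Ω → α) (Y : Ω → β) : ℝ :=
  ent p X + ent p Y - ent p (fun ω => (X ω, Y ω))

/-- Conditional mutual information `I(X ; Y | Z) = H(X | Z) - H(X | Y, Z)`. -/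
noncomputable def condMutInfo {Ω α β γ : Type*} [Fintype Ω] [Fintype α] [DecidableEq α]
    [Fintype β] [DecidableEq β] [Fintype γ] [DecidableEq γ]
    (p : Ω → ℝ) (X : Ω → α) (Y : Ω → β) (Z : Ω → γ) : ℝ :=
  condEnt p X Z - condEnt p X (fun ω => (Y ω, Z ω))

open Finset Real

lemma sum_mul_log_le_sum_mul_sub_one {ι : Type*} (s : Finset ι) (w r : ι → ℝ)
    (hw : ∀ i ∈ s, 0 ≤ w i) (hr : ∀ i ∈ s, 0 < w i → 0 < r i) :
    ∑ i ∈ s, w i * log (r i) ≤ ∑ i ∈ s, w i * (r i - 1) := by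
  refine sum_le_sum fun i hi => ?_
  rcases (hw i hi).eq_or_lt with h | h
  · simp [← h]
  · exact mul_le_mul_of_nonneg_left (log_le_sub_one_of_pos (hr i hi h)) h.le

section Entropy

variable {Ω α β γ : Type*} [Fintype Ω] [DecidableEq α] [DecidableEq β] [DecidableEq γ]
  (p : Ω → ℝ)

lemma pr_nonneg (hp : ∀ ω, 0 ≤ p ω) (X : Ω → α) (a : α) : 0 ≤ pr p X a :=
  sum_nonneg fun ω _ => hp ω

lemma pr_apply_pos (hp : ∀ ω, 0 ≤ p ω) (X : Ω → α) (ω : Ω) (h : 0 < p ω) :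
    0 < pr p X (X ω) :=
  h.trans_le (single_le_sum (fun ω' _ => hp ω') (by simp))

lemma sum_mul_comp_eq_sum_pr_mul [Fintype α] (X : Ω → α) (f : α → ℝ) :
    ∑ ω, p ω * f (X ω) = ∑ a, pr p X a * f a := by
  simp_rw [pr, sum_mul]
  rw [← sum_fiberwise univ X fun ω => p ω * f (X ω)]
  refine sum_congr rfl fun a _ => sum_congr rfl fun ω hω => ?_
  rw [(mem_filter.1 hω).2]

lemma sum_pr [Fintype α] (hp1 : ∑ ω, p ω = 1) (X : Ω → α) : ∑ a, pr p X a = 1 := by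
  simpa [hp1] using (sum_mul_comp_eq_sum_pr_mul p X fun _ => 1).symm

lemma pr_comp_of_injective {f : α → β} (hf : Function.Injective f) (X : Ω → α) (a : α) :
    pr p (fun ω => f (X ω)) (f a) = pr p X a := by
  simp only [pr, hf.eq_iff]

lemma pr_eq_sum_pr_prod_left [Fintype β] (X : Ω → α) (Y : Ω → β) (a : α) :
    pr p X a = ∑ b, pr p (fun ω => (X ω, Y ω)) (a, b) := by
  rw [pr, ← sum_fiberwise _ Y p]
  refine sum_congr rfl fun b _ => ?_
  simp only [pr, filter_filter, Prod.mk.injEq]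

lemma pr_eq_sum_pr_prod_right [Fintype α] (X : Ω → α) (Y : Ω → β) (b : β) :
    pr p Y b = ∑ a, pr p (fun ω => (X ω, Y ω)) (a, b) := by
  rw [pr_eq_sum_pr_prod_left p Y X b]
  exact sum_congr rfl fun a _ => (pr_comp_of_injective p Prod.swap_injective _ (b, a)).symm

lemma ent_eq_sum_mul_neg_log [Fintype α] (X : Ω → α) :
    ent p X = ∑ ω, p ω * -log (pr p X (X ω)) := by
  rw [sum_mul_comp_eq_sum_pr_mul p X fun a => -log (pr p X a)]
  simp only [ent, negMulLog, neg_mul, mul_neg]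

lemma ent_comp_of_injective [Fintype α] [Fintype β] {f : α → β} (hf : Function.Injective f)
    (X : Ω → α) : ent p (fun ω => f (X ω)) = ent p X := by
  rw [ent_eq_sum_mul_neg_log, ent_eq_sum_mul_neg_log]
  simp only [pr_comp_of_injective p hf]

lemma condEnt_comp_of_injective [Fintype α] [Fintype β] [Fintype γ] {f : β → γ}
    (hf : Function.Injective f) (X : Ω → α) (Y : Ω → β) :
    condEnt p X (fun ω => f (Y ω)) = condEnt p X Y := by
  rw [condEnt, condEnt, ← ent_comp_of_injective p hf Y,
    ← ent_comp_of_injective p (Function.injective_id.prodMap hf) fun ω => (X ω, Y ω)]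
  rfl

lemma ent_prod_of_indep [Fintype α] [Fintype β] (hp1 : ∑ ω, p ω = 1) (X : Ω → α) (Y : Ω → β)
    (h : ∀ a b, pr p (fun ω => (X ω, Y ω)) (a, b) = pr p X a * pr p Y b) :
    ent p (fun ω => (X ω, Y ω)) = ent p X + ent p Y := by
  simp only [ent, Fintype.sum_prod_type, h, negMulLog_mul, sum_add_distrib, ← sum_mul, ← mul_sum,
    sum_pr p hp1, one_mul]

lemma pr_prod_eq_mul_of_indep_prod (A : Ω → α) (B : Ω → β) (C : Ω → γ) [Fintype γ]
    (h : ∀ a bc, pr p (fun ω => (A ω, (B ω, C ω))) (a, bc)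
      = pr p A a * pr p (fun ω => (B ω, C ω)) bc) (a : α) (b : β) :
    pr p (fun ω => (A ω, B ω)) (a, b) = pr p A a * pr p B b := by
  rw [pr_eq_sum_pr_prod_left p _ C, pr_eq_sum_pr_prod_left p B C, mul_sum]
  refine sum_congr rfl fun c _ => ?_
  rw [← h]
  exact (pr_comp_of_injective p (Equiv.prodAssoc α β γ).injective _ ((a, b), c)).symm

lemma condEnt_prod_of_indep [Fintype α] [Fintype β] [Fintype γ] (hp1 : ∑ ω, p ω = 1)
    (X : Ω → α) (Y : Ω → β) (N : Ω → γ)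
    (h : ∀ n yx, pr p (fun ω => (N ω, (Y ω, X ω))) (n, yx)
      = pr p N n * pr p (fun ω => (Y ω, X ω)) yx) :
    condEnt p X (fun ω => (Y ω, N ω)) = condEnt p X Y := by
  have hXYN : ent p (fun ω => (N ω, (Y ω, X ω))) = ent p (fun ω => (X ω, (Y ω, N ω))) :=
    ent_comp_of_injective p (f := fun t : α × β × γ => (t.2.2, t.2.1, t.1))
      (by rintro ⟨x, y, n⟩ ⟨x', y', n'⟩ h; simp_all) fun ω => (X ω, Y ω, N ω)
  have hYX : ent p (fun ω => (Y ω, X ω)) = ent p (fun ω => (X ω, Y ω)) :=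
    ent_comp_of_injective p Prod.swap_injective fun ω => (X ω, Y ω)
  have hNY : ent p (fun ω => (N ω, Y ω)) = ent p (fun ω => (Y ω, N ω)) :=
    ent_comp_of_injective p Prod.swap_injective fun ω => (Y ω, N ω)
  rw [condEnt, condEnt, ← hXYN, ← hNY, ent_prod_of_indep p hp1 N _ h,
    ent_prod_of_indep p hp1 N Y (pr_prod_eq_mul_of_indep_prod p N Y X h), hYX]
  ring

end Entropy

section Submodularity

variable {Ω α β γ : Type*} [Fintype Ω] [Fintype α] [Fintype β] [Fintype γ]
  [DecidableEq α] [DecidableEq β] [DecidableEq γ] (p : Ω → ℝ)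

lemma sum_pr_prod_mul_pr_prod_div_pr (hp1 : ∑ ω, p ω = 1) (X : Ω → α) (Y : Ω → β)
    (W : Ω → γ) :
    ∑ x, ∑ y, ∑ w,
      pr p (fun ω => (X ω, W ω)) (x, w) * pr p (fun ω => (Y ω, W ω)) (y, w) / pr p W w = 1 :=
  calc _ = ∑ w, ∑ x, ∑ y,
        pr p (fun ω => (X ω, W ω)) (x, w) * pr p (fun ω => (Y ω, W ω)) (y, w) / pr p W w :=
        (sum_congr rfl fun _ _ => sum_comm).trans sum_comm
    _ = ∑ w, (∑ x, pr p (fun ω => (X ω, W ω)) (x, w))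
          * (∑ y, pr p (fun ω => (Y ω, W ω)) (y, w)) / pr p W w := by
        simp_rw [sum_mul_sum, sum_div]
    _ = ∑ w, pr p W w := by
        simp_rw [← pr_eq_sum_pr_prod_right, mul_self_div_self]
    _ = 1 := sum_pr p hp1 W

lemma condEnt_prod_le (hp : ∀ ω, 0 ≤ p ω) (hp1 : ∑ ω, p ω = 1) (X : Ω → α) (Y : Ω → β)
    (W : Ω → γ) : condEnt p X (fun ω => (Y ω, W ω)) ≤ condEnt p X W := by
  set V : Ω → α × β × γ := fun ω => (X ω, Y ω, W ω)
  set XW : Ω → α × γ := fun ω => (X ω, W ω)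
  set YW : Ω → β × γ := fun ω => (Y ω, W ω)
  -- `q` compares the law of `V` with the law under which `X` and `Y` are independent given `W`;
  -- `E[log q] ≤ E[q] - 1 ≤ 0` is Gibbs' inequality.
  let q : α × β × γ → ℝ := fun v =>
    pr p XW (v.1, v.2.2) * pr p YW (v.2.1, v.2.2) / pr p W v.2.2 / pr p V v
  have hpos (ω : Ω) (h : 0 < p ω) : 0 < pr p XW (XW ω) ∧ 0 < pr p YW (YW ω) ∧
      0 < pr p W (W ω) ∧ 0 < pr p V (V ω) :=
    ⟨pr_apply_pos p hp XW ω h, pr_apply_pos p hp YW ω h, pr_apply_pos p hp W ω h,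
      pr_apply_pos p hp V ω h⟩
  have hlog (ω : Ω) : p ω * log (q (V ω)) = p ω * -log (pr p V (V ω))
      + p ω * -log (pr p W (W ω)) - p ω * -log (pr p XW (XW ω))
      - p ω * -log (pr p YW (YW ω)) := by
    rcases (hp ω).eq_or_lt with h | h
    · simp [← h]
    · obtain ⟨hXW, hYW, hW, hV⟩ := hpos ω h
      change p ω * log (pr p XW (XW ω) * pr p YW (YW ω) / pr p W (W ω) / pr p V (V ω)) = _
      rw [log_div (by positivity) hV.ne', log_div (by positivity) hW.ne',
        log_mul hXW.ne' hYW.ne']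
      ring
  have hmass : ∑ ω, p ω * q (V ω) ≤ 1 := by
    rw [sum_mul_comp_eq_sum_pr_mul p V q, ← sum_pr_prod_mul_pr_prod_div_pr p hp1 X Y W]
    simp only [Fintype.sum_prod_type]
    gcongr with x _ y _ w _
    rcases (pr_nonneg p hp V (x, y, w)).eq_or_lt with h | h
    · rw [← h, zero_mul]
      exact div_nonneg (mul_nonneg (pr_nonneg p hp _ _) (pr_nonneg p hp _ _)) (pr_nonneg p hp _ _)
    · exact (mul_div_cancel₀ _ h.ne').le
  have hgibbs := sum_mul_log_le_sum_mul_sub_one univ p (fun ω => q (V ω))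
    (fun ω _ => hp ω) fun ω _ h => by
      obtain ⟨_, _, _, _⟩ := hpos ω h
      simp only [q]
      positivity
  simp only [hlog, sum_add_distrib, sum_sub_distrib, mul_sub, mul_one, hp1] at hgibbs
  rw [condEnt, condEnt, ent_eq_sum_mul_neg_log p V, ent_eq_sum_mul_neg_log p W,
    ent_eq_sum_mul_neg_log p XW, ent_eq_sum_mul_neg_log p YW]
  linarith

end Submodularity

/-- **Lemma 2.** If `N` is independent of the pair `(Y, Z)`, then
`H(Z | Y + N) ≥ H(Z | Y)`: adding independent noise to a feature can only
increase the uncertainty about any other variable. -/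
theorem stmt3 {Ω G 𝒵 : Type*} [Fintype Ω]
    [AddCommGroup G] [Fintype G] [DecidableEq G] [Fintype 𝒵] [DecidableEq 𝒵]
    (p : Ω → ℝ) (hp : ∀ ω, 0 ≤ p ω) (hp1 : ∑ ω, p ω = 1)
    (Y N : Ω → G) (Z : Ω → 𝒵)
    (hindep : ∀ (n : G) (y : G) (z : 𝒵),
      pr p (fun ω => (N ω, (Y ω, Z ω))) (n, (y, z))
        = pr p N n * pr p (fun ω => (Y ω, Z ω)) (y, z)) :
    condEnt p Z (fun ω => Y ω + N ω) ≥ condEnt p Z Y :=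
  calc condEnt p Z Y = condEnt p Z (fun ω => (Y ω, N ω)) :=
        (condEnt_prod_of_indep p hp1 Z Y N fun n yz => hindep n yz.1 yz.2).symm
    _ = condEnt p Z (fun ω => (Y ω, Y ω + N ω)) :=
        (condEnt_comp_of_injective p (Equiv.prodShear (Equiv.refl G) Equiv.addLeft).injective Z
          fun ω => (Y ω, N ω)).symm
    _ ≤ condEnt p Z (fun ω => Y ω + N ω) := condEnt_prod_le p hp hp1 Z Y _
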